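/- arXiv:1503.02163 — 3 statements merged into one kernel-verified Lean document; each statement's English description precedes it below -/
import Mathlib

section
/- Let 𝒳 be a set, x_1,...,x_n, x′_1,...,x′_n ∈ 𝒳, and let f, g : 𝒳 → [0,1]. Let Φ : ℝⁿ → ℝ be twice differentiable and satisfy ‖∂_k Φ‖_∞ ≤ L for every k ∈ {1,...,n} and √(Σ_{k=1}^n ‖Σ_{l : l ≠ k} (∂_{lk} Φ)²‖_∞) ≤ M. For σ ∈ {0,1}ⁿ set Z(σ) = Y_f(σ) − Y_g(σ), where Y_f(σ) = Φ( Σ_i [σ_i f(x_i) + (1−σ_i) f(x′_i)] e_i ) − Φ( Σ_i [σ_i f(x′_i) + (1−σ_i) f(x_i)] e_i ) and Y_g is defined analogously. Let Z_k(σ, b) denote Z evaluated at the vector obtained from σ by replacing its k-th coordinate by b ∈ {0,1}. Then for every σ ∈ {0,1}ⁿ, Σ_{k=1}^n ( Z_k(σ,1) − Z_k(σ,0) )² ≤ 16 (M² + L²) d(f,g)², where d(f,g)² = Σ_{i=1}^n (f(x_i) − g(x_i))² + (f(x′_i) − g(x′_i))². -/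
/-!
`Z_k(σ,1) - Z_k(σ,0)` is a sum of two terms, each comparing an increment of `Φ` in the `k`-th
coordinate at a base point built from `f` with the corresponding one built from `g`. Moving the
two endpoints of the increment costs `L` times their displacement (the bound on `∂_k Φ`). Moving
the remaining coordinates of the base point is the mean value inequality for `∂_k Φ` together
with Cauchy–Schwarz, and costs `√C_k · d(f,g) · |g(x_k) - g(x'_k)| ≤ √C_k · d(f,g)`, where `C_k`
bounds `∑_{l ≠ k} (∂_{lk} Φ)²`. Squaring, summing over `k` and using `∑_k C_k ≤ M²` gives the
claim.
-/

open Finset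

/-- `∂_k Φ`, the partial derivative of `Φ : ℝⁿ → ℝ` with respect to the `k`-th variable. -/
noncomputable def pderiv1 {n : ℕ} (Φ : (Fin n → ℝ) → ℝ) (k : Fin n) (x : Fin n → ℝ) : ℝ :=
  fderiv ℝ Φ x (Pi.single k 1)

/-- `∂_{lk} Φ`, the second mixed partial derivative of `Φ` w.r.t. the `k`-th and `l`-th
variables. -/
noncomputable def pderiv2 {n : ℕ} (Φ : (Fin n → ℝ) → ℝ) (l k : Fin n) (x : Fin n → ℝ) : ℝ :=
  fderiv ℝ (fun y => pderiv1 Φ k y) x (Pi.single l 1)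

/-- The process `Y_f(σ) = Φ(∑_i [σ_i f(x_i) + (1-σ_i) f(x'_i)] e_i)
- Φ(∑_i [σ_i f(x'_i) + (1-σ_i) f(x_i)] e_i)`, with `σ ∈ {0,1}ⁿ` encoded by `Fin n → Bool`. -/
noncomputable def Yproc {𝒳 : Type*} {n : ℕ} (Φ : (Fin n → ℝ) → ℝ)
    (x x' : Fin n → 𝒳) (f : 𝒳 → ℝ) (σ : Fin n → Bool) : ℝ :=
  Φ (fun i => if σ i then f (x i) else f (x' i)) -
    Φ (fun i => if σ i then f (x' i) else f (x i))

open Function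

section PartialDerivatives

variable {n : ℕ}

lemma fderiv_apply_eq_sum_pderiv1 (ψ : (Fin n → ℝ) → ℝ) (z d : Fin n → ℝ) :
    fderiv ℝ ψ z d = ∑ l, d l * pderiv1 ψ l z := by
  conv_lhs => rw [pi_eq_sum_univ' d]
  simp [pderiv1]

lemma hasDerivAt_comp_update {ψ : (Fin n → ℝ) → ℝ} (hψ : Differentiable ℝ ψ)
    (w : Fin n → ℝ) (k : Fin n) (t : ℝ) :
    HasDerivAt (fun t => ψ (update w k t)) (pderiv1 ψ k (update w k t)) t :=
  (hψ _).hasFDerivAt.comp_hasDerivAt t (hasDerivAt_update w k t)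

lemma abs_sub_le_mul_abs_sub_of_hasDerivAt {F F' : ℝ → ℝ} {C : ℝ}
    (hF : ∀ t, HasDerivAt F (F' t) t) (hC : ∀ t, |F' t| ≤ C) (a b : ℝ) :
    |F a - F b| ≤ C * |a - b| :=
  convex_univ.norm_image_sub_le_of_norm_hasDerivWithin_le
    (fun t _ => (hF t).hasDerivWithinAt) (fun t _ => hC t) (Set.mem_univ b) (Set.mem_univ a)

lemma abs_sub_le_of_sum_sq_pderiv1_le {ψ : (Fin n → ℝ) → ℝ} (hψ : Differentiable ℝ ψ)
    {s : Finset (Fin n)} {C : ℝ} (hC : ∀ z, ∑ l ∈ s, pderiv1 ψ l z ^ 2 ≤ C)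
    {p q : Fin n → ℝ} (hpq : ∀ l ∉ s, p l = q l) :
    |ψ q - ψ p| ≤ √C * √(∑ l ∈ s, (q l - p l) ^ 2) := by
  have hderiv : ∀ t : ℝ, HasDerivAt (fun t => ψ (p + t • (q - p)))
      (∑ l ∈ s, (q l - p l) * pderiv1 ψ l (p + t • (q - p))) t := by
    intro t
    have hline : HasDerivAt (fun t : ℝ => p + t • (q - p)) (q - p) t := by
      simpa using ((hasDerivAt_id t).smul_const (q - p)).const_add p
    refine ((hψ _).hasFDerivAt.comp_hasDerivAt t hline).congr_deriv ?_
    rw [fderiv_apply_eq_sum_pderiv1, ← sum_subset (subset_univ s)]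
    · rfl
    · intro l _ hl
      simp [hpq l hl]
  have hbound : ∀ t : ℝ, |∑ l ∈ s, (q l - p l) * pderiv1 ψ l (p + t • (q - p))|
      ≤ √C * √(∑ l ∈ s, (q l - p l) ^ 2) := by
    intro t
    calc |∑ l ∈ s, (q l - p l) * pderiv1 ψ l (p + t • (q - p))|
        ≤ ∑ l ∈ s, |q l - p l| * |pderiv1 ψ l (p + t • (q - p))| := by
          simpa only [abs_mul] using abs_sum_le_sum_abs (fun l => (q l - p l) * pderiv1 ψ l (p + t • (q - p))) s
      _ ≤ √(∑ l ∈ s, (q l - p l) ^ 2) * √(∑ l ∈ s, pderiv1 ψ l (p + t • (q - p)) ^ 2) := by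
          simpa only [sq_abs] using Real.sum_mul_le_sqrt_mul_sqrt s (fun l => |q l - p l|)
            (fun l => |pderiv1 ψ l (p + t • (q - p))|)
      _ ≤ √C * √(∑ l ∈ s, (q l - p l) ^ 2) := by
          rw [mul_comm]
          gcongr
          exact hC _
  simpa using abs_sub_le_mul_abs_sub_of_hasDerivAt hderiv hbound 1 0

variable {Φ : (Fin n → ℝ) → ℝ} {k : Fin n}

lemma abs_update_sub_update_le (hΦ : Differentiable ℝ Φ) {L : ℝ}
    (hL : ∀ z, |pderiv1 Φ k z| ≤ L) (w : Fin n → ℝ) (a b : ℝ) :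
    |Φ (update w k a) - Φ (update w k b)| ≤ L * |a - b| :=
  abs_sub_le_mul_abs_sub_of_hasDerivAt (hasDerivAt_comp_update hΦ w k) (fun _ => hL _) a b

-- Differentiating in the `k`-th coordinate first, only `∂_l ∂_k Φ` appears: no symmetry of the
-- second derivative is needed.
lemma abs_update_sub_update_sub_sub_le (hΦ : Differentiable ℝ Φ)
    (hΦk : Differentiable ℝ (pderiv1 Φ k)) {C : ℝ}
    (hC : ∀ z, ∑ l ∈ univ.erase k, pderiv2 Φ l k z ^ 2 ≤ C) (U V : Fin n → ℝ) (a b : ℝ) :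
    |(Φ (update U k a) - Φ (update U k b)) - (Φ (update V k a) - Φ (update V k b))|
      ≤ √C * √(∑ l ∈ univ.erase k, (U l - V l) ^ 2) * |a - b| := by
  have hbound : ∀ t, |pderiv1 Φ k (update U k t) - pderiv1 Φ k (update V k t)|
      ≤ √C * √(∑ l ∈ univ.erase k, (U l - V l) ^ 2) := by
    intro t
    have hUV : ∀ l ∉ univ.erase k, update V k t l = update U k t l := by
      intro l hl
      obtain rfl : l = k := by simpa using hl
      simp
    have hdist : ∑ l ∈ univ.erase k, (update U k t l - update V k t l) ^ 2
        = ∑ l ∈ univ.erase k, (U l - V l) ^ 2 :=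
      sum_congr rfl fun l hl => by rw [update_of_ne (ne_of_mem_erase hl),
        update_of_ne (ne_of_mem_erase hl)]
    simpa only [hdist] using abs_sub_le_of_sum_sq_pderiv1_le hΦk hC hUV
  calc _ = |(Φ (update U k a) - Φ (update V k a)) - (Φ (update U k b) - Φ (update V k b))| := by
        ring_nf
    _ ≤ _ := abs_sub_le_mul_abs_sub_of_hasDerivAt
        (fun t => (hasDerivAt_comp_update hΦ U k t).sub (hasDerivAt_comp_update hΦ V k t))
        hbound a b

lemma abs_update_sub_update_sub_update_sub_update_le (hΦ : Differentiable ℝ Φ)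
    (hΦk : Differentiable ℝ (pderiv1 Φ k)) {L C : ℝ} (hL : ∀ z, |pderiv1 Φ k z| ≤ L)
    (hC : ∀ z, ∑ l ∈ univ.erase k, pderiv2 Φ l k z ^ 2 ≤ C)
    (W W' : Fin n → ℝ) (a b a' b' : ℝ) :
    |(Φ (update W k a) - Φ (update W k b)) - (Φ (update W' k a') - Φ (update W' k b'))|
      ≤ L * |a - a'| + L * |b - b'|
        + √C * √(∑ l ∈ univ.erase k, (W l - W' l) ^ 2) * |a' - b'| := by
  have hsecond := abs_update_sub_update_sub_sub_le hΦ hΦk hC W W' a' b'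
  calc _ = |((Φ (update W k a) - Φ (update W k a')) - (Φ (update W k b) - Φ (update W k b')))
          + ((Φ (update W k a') - Φ (update W k b'))
            - (Φ (update W' k a') - Φ (update W' k b')))| := by
        congr 1; ring
    _ ≤ |Φ (update W k a) - Φ (update W k a')| + |Φ (update W k b) - Φ (update W k b')|
          + |(Φ (update W k a') - Φ (update W k b'))
            - (Φ (update W' k a') - Φ (update W' k b'))| :=
        (abs_add_le _ _).trans (add_le_add_left (abs_sub _ _) _)
    _ ≤ _ := by
        gcongr
        · exact abs_update_sub_update_le hΦ hL W a a'
        · exact abs_update_sub_update_le hΦ hL W b b'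

end PartialDerivatives

noncomputable def Zproc {𝒳 : Type*} {n : ℕ} (Φ : (Fin n → ℝ) → ℝ) (x x' : Fin n → 𝒳)
    (f g : 𝒳 → ℝ) (σ : Fin n → Bool) : ℝ :=
  Yproc Φ x x' f σ - Yproc Φ x x' g σ

section Processes

variable {𝒳 : Type*} {n : ℕ} {Φ : (Fin n → ℝ) → ℝ} {x x' : Fin n → 𝒳} {k : Fin n}

lemma Yproc_update_true_sub_Yproc_update_false (h : 𝒳 → ℝ) (σ : Fin n → Bool) :
    Yproc Φ x x' h (update σ k true) - Yproc Φ x x' h (update σ k false)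
      = (Φ (update (fun i => if σ i then h (x i) else h (x' i)) k (h (x k)))
          - Φ (update (fun i => if σ i then h (x i) else h (x' i)) k (h (x' k))))
        + (Φ (update (fun i => if σ i then h (x' i) else h (x i)) k (h (x k)))
          - Φ (update (fun i => if σ i then h (x' i) else h (x i)) k (h (x' k)))) := by
  have hsel : ∀ (u v : Fin n → ℝ) (b : Bool),
      (fun i => if update σ k b i then u i else v i)
        = update (fun i => if σ i then u i else v i) k (if b then u k else v k) :=
    fun u v b => funext (apply_update (fun i c => if c then u i else v i) σ k b)
  simp only [Yproc, hsel, if_true, Bool.false_eq_true, if_false]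
  ring

lemma sum_sq_sub_ite_le (s : Finset (Fin n)) (σ : Fin n → Bool) (u v u' v' : Fin n → ℝ) :
    ∑ l ∈ s, ((if σ l then u l else v l) - (if σ l then u' l else v' l)) ^ 2
      ≤ ∑ l, ((u l - u' l) ^ 2 + (v l - v' l) ^ 2) := by
  refine (sum_le_sum fun l _ => ?_).trans
    (sum_le_sum_of_subset_of_nonneg (subset_univ s) fun l _ _ => by positivity)
  cases σ l
  · simpa only [Bool.false_eq_true, if_false] using le_add_of_nonneg_left (sq_nonneg _)
  · simpa only [if_true] using le_add_of_nonneg_right (sq_nonneg _)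

lemma sq_Zproc_update_true_sub_Zproc_update_false_le {f g : 𝒳 → ℝ}
    (hg : ∀ y, g y ∈ Set.Icc (0 : ℝ) 1) (hΦ : Differentiable ℝ Φ)
    (hΦk : Differentiable ℝ (pderiv1 Φ k)) {L C : ℝ} (hL : ∀ z, |pderiv1 Φ k z| ≤ L)
    (hC : ∀ z, ∑ l ∈ univ.erase k, pderiv2 Φ l k z ^ 2 ≤ C) (σ : Fin n → Bool) :
    (Zproc Φ x x' f g (update σ k true) - Zproc Φ x x' f g (update σ k false)) ^ 2
      ≤ 16 * L ^ 2 * ((f (x k) - g (x k)) ^ 2 + (f (x' k) - g (x' k)) ^ 2)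
        + 8 * C * ∑ i, ((f (x i) - g (x i)) ^ 2 + (f (x' i) - g (x' i)) ^ 2) := by
  set S := ∑ i, ((f (x i) - g (x i)) ^ 2 + (f (x' i) - g (x' i)) ^ 2)
  set α := f (x k) - g (x k)
  set β := f (x' k) - g (x' k)
  have hS0 : 0 ≤ S := by positivity
  have hC0 : 0 ≤ C := (sum_nonneg fun _ _ => sq_nonneg _).trans (hC 0)
  have hg1 : |g (x k) - g (x' k)| ≤ 1 := by
    obtain ⟨h0, h1⟩ := hg (x k)
    obtain ⟨h0', h1'⟩ := hg (x' k)
    exact abs_le.2 ⟨by linarith, by linarith⟩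
  have hpair : ∀ W W' : Fin n → ℝ, ∑ l ∈ univ.erase k, (W l - W' l) ^ 2 ≤ S →
      |(Φ (update W k (f (x k))) - Φ (update W k (f (x' k))))
        - (Φ (update W' k (g (x k))) - Φ (update W' k (g (x' k))))|
        ≤ L * |α| + L * |β| + √C * √S := by
    intro W W' hWW'
    refine (abs_update_sub_update_sub_update_sub_update_le hΦ hΦk hL hC W W' _ _ _ _).trans
      (add_le_add_right ?_ _)
    calc √C * √(∑ l ∈ univ.erase k, (W l - W' l) ^ 2) * |g (x k) - g (x' k)|
        ≤ √C * √S * 1 := by gcongr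
      _ = √C * √S := mul_one _
  have hU := hpair (fun i => if σ i then f (x i) else f (x' i))
    (fun i => if σ i then g (x i) else g (x' i)) (sum_sq_sub_ite_le _ σ _ _ _ _)
  have hV := hpair (fun i => if σ i then f (x' i) else f (x i))
    (fun i => if σ i then g (x' i) else g (x i))
    ((sum_sq_sub_ite_le _ σ _ _ _ _).trans_eq (sum_congr rfl fun _ _ => add_comm _ _))
  have hZ : |Zproc Φ x x' f g (update σ k true) - Zproc Φ x x' f g (update σ k false)|
      ≤ 2 * (L * |α| + L * |β| + √C * √S) := by
    rw [Zproc, Zproc, sub_sub_sub_comm, Yproc_update_true_sub_Yproc_update_false,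
      Yproc_update_true_sub_Yproc_update_false, add_sub_add_comm]
    linarith [abs_add_le _ _ |>.trans (add_le_add hU hV)]
  calc _ ≤ (2 * (L * |α| + L * |β| + √C * √S)) ^ 2 := by
        rw [← sq_abs]; exact pow_le_pow_left₀ (abs_nonneg _) hZ 2
    _ ≤ 16 * L ^ 2 * (α ^ 2 + β ^ 2) + 8 * C * S := by
        nlinarith [sq_nonneg (L * |α| + L * |β| - √C * √S), sq_nonneg (|α| - |β|),
          Real.sq_sqrt hC0, Real.sq_sqrt hS0, sq_abs α, sq_abs β, sq_nonneg L]

end Processes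

theorem statement4_general
    {𝒳 : Type*} {n : ℕ} (x x' : Fin n → 𝒳) (f g : 𝒳 → ℝ)
    (hg : ∀ y, g y ∈ Set.Icc (0 : ℝ) 1)
    (Φ : (Fin n → ℝ) → ℝ) (L M : ℝ)
    -- Φ is twice differentiable
    (hΦ : Differentiable ℝ Φ)
    (hΦ2 : ∀ k, Differentiable ℝ (pderiv1 Φ k))
    -- ‖∂_k Φ‖_∞ ≤ L for every k
    (hL : ∀ k, ∀ x, |pderiv1 Φ k x| ≤ L)
    -- √(∑_k ‖∑_{l ≠ k} (∂_{lk} Φ)²‖_∞) ≤ M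
    (hM : ∃ C : Fin n → ℝ,
      (∀ k, ∀ x, ∑ l ∈ Finset.univ.erase k, (pderiv2 Φ l k x) ^ 2 ≤ C k) ∧
      Real.sqrt (∑ k, C k) ≤ M)
    (σ : Fin n → Bool) :
    ∑ k : Fin n,
      ((Yproc Φ x x' f (Function.update σ k true) - Yproc Φ x x' g (Function.update σ k true))
        - (Yproc Φ x x' f (Function.update σ k false)
            - Yproc Φ x x' g (Function.update σ k false))) ^ 2
      ≤ 16 * (M ^ 2 + L ^ 2) *
          ∑ i, ((f (x i) - g (x i)) ^ 2 + (f (x' i) - g (x' i)) ^ 2) := by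
  obtain ⟨C, hC, hCM⟩ := hM
  set S := ∑ i, ((f (x i) - g (x i)) ^ 2 + (f (x' i) - g (x' i)) ^ 2)
  have hS0 : 0 ≤ S := by positivity
  have hCsum : ∑ k, C k ≤ M ^ 2 := (Real.sqrt_le_iff.1 hCM).2
  calc _ ≤ ∑ k, (16 * L ^ 2 * ((f (x k) - g (x k)) ^ 2 + (f (x' k) - g (x' k)) ^ 2)
            + 8 * C k * S) :=
        sum_le_sum fun k _ => sq_Zproc_update_true_sub_Zproc_update_false_le
          hg hΦ (hΦ2 k) (hL k) (hC k) σ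
    _ = 16 * L ^ 2 * S + 8 * (∑ k, C k) * S := by
        rw [sum_add_distrib, ← mul_sum, ← sum_mul, ← mul_sum]
    _ ≤ 16 * (M ^ 2 + L ^ 2) * S := by nlinarith

/-- With `Z(σ) = Y_f(σ) - Y_g(σ)`, if `Φ` is twice differentiable with
`‖∂_k Φ‖_∞ ≤ L` for all `k` and `√(∑_k ‖∑_{l ≠ k} (∂_{lk} Φ)²‖_∞) ≤ M`, then for every
`σ ∈ {0,1}ⁿ`, `∑_{k=1}^n (Z_k(σ,1) - Z_k(σ,0))² ≤ 16 (M² + L²) d(f,g)²`, where `Z_k(σ,b)`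
replaces the `k`-th coordinate of `σ` by `b` and
`d(f,g)² = ∑_i (f(x_i)-g(x_i))² + (f(x'_i)-g(x'_i))²`. -/
theorem statement4
    {𝒳 : Type*} {n : ℕ} (x x' : Fin n → 𝒳) (f g : 𝒳 → ℝ)
    (hf : ∀ y, f y ∈ Set.Icc (0 : ℝ) 1) (hg : ∀ y, g y ∈ Set.Icc (0 : ℝ) 1)
    (Φ : (Fin n → ℝ) → ℝ) (L M : ℝ)
    -- Φ is twice differentiable
    (hΦ : Differentiable ℝ Φ)
    (hΦ2 : ∀ k, Differentiable ℝ (pderiv1 Φ k))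
    -- ‖∂_k Φ‖_∞ ≤ L for every k
    (hL : ∀ k, ∀ x, |pderiv1 Φ k x| ≤ L)
    -- √(∑_k ‖∑_{l ≠ k} (∂_{lk} Φ)²‖_∞) ≤ M
    (hM : ∃ C : Fin n → ℝ,
      (∀ k, ∀ x, ∑ l ∈ Finset.univ.erase k, (pderiv2 Φ l k x) ^ 2 ≤ C k) ∧
      Real.sqrt (∑ k, C k) ≤ M)
    (σ : Fin n → Bool) :
    ∑ k : Fin n,
      ((Yproc Φ x x' f (Function.update σ k true) - Yproc Φ x x' g (Function.update σ k true))
        - (Yproc Φ x x' f (Function.update σ k false)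
            - Yproc Φ x x' g (Function.update σ k false))) ^ 2
      ≤ 16 * (M ^ 2 + L ^ 2) *
          ∑ i, ((f (x i) - g (x i)) ^ 2 + (f (x' i) - g (x' i)) ^ 2) :=
  statement4_general x x' f g hg Φ L M hΦ hΦ2 hL hM σ
end

section
/- Let Φ : ℝⁿ → ℝ be twice continuously differentiable, let k ∈ {1,...,n}, let A, B ∈ [0,1]ⁿ, and let a, b ∈ [0,1]. Let Φ_k(v, y) denote Φ evaluated at the vector that agrees with v in all coordinates except the k-th, which is set equal to y. Then the second-order difference T = [Φ_k(A, a) − Φ_k(A, b)] − [Φ_k(B, a) − Φ_k(B, b)] satisfies T² ≤ ‖ Σ_{l : l ≠ k} (∂_{lk} Φ)² ‖_∞ · Σ_{l : l ≠ k} (A_l − B_l)². -/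
/-!
Put `g y = Φ_k(A, y) - Φ_k(B, y)`, so that `T = g a - g b` and `g' y = ∂_k Φ(A_y) - ∂_k Φ(B_y)`,
where `A_y`, `B_y` are `A`, `B` with `k`-th coordinate `y`. Since `A_y - B_y` is the vector `V` of
differences `A_l - B_l` off the `k`-th coordinate, the mean value theorem along the segment from
`B_y` to `A_y` bounds `|g' y|` by the supremum of `|D(∂_k Φ) V| = |∑_{l ≠ k} (A_l - B_l) ∂_{lk} Φ|`,
which by Cauchy–Schwarz is at most `√(C ∑_{l ≠ k} (A_l - B_l)²)`. A second mean value step gives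
`|T| ≤ √(C ∑_{l ≠ k} (A_l - B_l)²) |a - b|`, and `|a - b| ≤ 1`.
-/

open Finset

theorem abs_sub_le_of_abs_fderiv_apply_le {E : Type*} [NormedAddCommGroup E] [NormedSpace ℝ E]
    {f : E → ℝ} (hf : Differentiable ℝ f) {v : E} {M : ℝ} (hM : ∀ x, |fderiv ℝ f x v| ≤ M)
    (p : E) : |f (p + v) - f p| ≤ M := by
  have hline (t : ℝ) :
      HasDerivAt (fun t : ℝ => f (p + t • v)) (fderiv ℝ f (p + t • v) v) t := by
    have hseg : HasDerivAt (fun t : ℝ => p + t • v) v t := by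
      simpa using ((hasDerivAt_id t).smul_const v).const_add p
    exact (hf _).hasFDerivAt.comp_hasDerivAt t hseg
  simpa using norm_image_sub_le_of_norm_deriv_le_segment_01'
    (fun t _ => (hline t).hasDerivWithinAt) (fun t _ => hM (p + t • v))

theorem sq_apply_update_zero_le {ι : Type*} [Fintype ι] [DecidableEq ι]
    (L : (ι → ℝ) →L[ℝ] ℝ) (w : ι → ℝ) (k : ι) :
    L (Function.update w k 0) ^ 2
      ≤ (∑ l ∈ univ.erase k, w l ^ 2) * ∑ l ∈ univ.erase k, L (Pi.single l 1) ^ 2 := by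
  have hexpand : L (Function.update w k 0) = ∑ l ∈ univ.erase k, w l * L (Pi.single l 1) := by
    conv_lhs => rw [pi_eq_sum_univ' (Function.update w k 0)]
    rw [map_sum, ← add_sum_erase _ _ (mem_univ k)]
    simp only [Function.update_self, zero_smul, map_zero, zero_add, map_smul, smul_eq_mul]
    exact sum_congr rfl fun l hl => by rw [Function.update_of_ne (ne_of_mem_erase hl)]
  rw [hexpand]
  exact sum_mul_sq_le_sq_mul_sq _ _ _

theorem update_add_update_sub {ι : Type*} [DecidableEq ι] (A B : ι → ℝ) (k : ι) (y : ℝ) :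
    Function.update B k y + Function.update (A - B) k 0 = Function.update A k y := by
  ext i
  by_cases hi : i = k <;> simp [hi]

theorem differentiable_pderiv1 {n : ℕ} {Φ : (Fin n → ℝ) → ℝ} (hΦ : ContDiff ℝ 2 Φ) (k : Fin n) :
    Differentiable ℝ (pderiv1 Φ k) :=
  ((hΦ.fderiv_right (m := 1) (by norm_num)).differentiable (by norm_num)).clm_apply
    (differentiable_const _)

theorem hasDerivAt_comp_update_s5 {n : ℕ} {Φ : (Fin n → ℝ) → ℝ} (hΦ : Differentiable ℝ Φ)
    (A : Fin n → ℝ) (k : Fin n) (y : ℝ) :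
    HasDerivAt (fun y => Φ (Function.update A k y)) (pderiv1 Φ k (Function.update A k y)) y :=
  (hΦ _).hasFDerivAt.comp_hasDerivAt y (hasDerivAt_update A k y)

theorem statement5_general
    {n : ℕ} (Φ : (Fin n → ℝ) → ℝ) (hΦ : ContDiff ℝ 2 Φ) (k : Fin n)
    (A B : Fin n → ℝ)
    (a b : ℝ) (ha : a ∈ Set.Icc (0 : ℝ) 1) (hb : b ∈ Set.Icc (0 : ℝ) 1)
    (C : ℝ) (hC : ∀ x : Fin n → ℝ, ∑ l ∈ Finset.univ.erase k, (pderiv2 Φ l k x) ^ 2 ≤ C) :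
    ((Φ (Function.update A k a) - Φ (Function.update A k b))
      - (Φ (Function.update B k a) - Φ (Function.update B k b))) ^ 2
      ≤ C * ∑ l ∈ Finset.univ.erase k, (A l - B l) ^ 2 := by
  set S := ∑ l ∈ univ.erase k, (A l - B l) ^ 2
  have hS : 0 ≤ S := sum_nonneg fun _ _ => sq_nonneg _
  have hCS : 0 ≤ C * S := mul_nonneg ((sum_nonneg fun _ _ => sq_nonneg _).trans (hC 0)) hS
  have hmixed (y : ℝ) :
      |pderiv1 Φ k (Function.update A k y) - pderiv1 Φ k (Function.update B k y)| ≤ √(C * S) := by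
    rw [← update_add_update_sub A B k y]
    refine abs_sub_le_of_abs_fderiv_apply_le (differentiable_pderiv1 hΦ k)
      (fun x => Real.abs_le_sqrt ?_) _
    calc _ ≤ S * ∑ l ∈ univ.erase k, pderiv2 Φ l k x ^ 2 := sq_apply_update_zero_le _ _ _
      _ ≤ S * C := by gcongr; exact hC x
      _ = C * S := mul_comm _ _
  have hΦ' : Differentiable ℝ Φ := hΦ.differentiable (by norm_num)
  have hmvt := Convex.norm_image_sub_le_of_norm_hasDerivWithin_le
    (fun y _ => ((hasDerivAt_comp_update_s5 hΦ' A k y).sub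
      (hasDerivAt_comp_update_s5 hΦ' B k y)).hasDerivWithinAt)
    (fun y _ => hmixed y) convex_univ (Set.mem_univ b) (Set.mem_univ a)
  have hab : |a - b| ≤ 1 := abs_sub_le_iff.2 ⟨by linarith [ha.2, hb.1], by linarith [ha.1, hb.2]⟩
  rw [← sq_abs, ← Real.le_sqrt (abs_nonneg _) hCS]
  calc _ = |(Φ (Function.update A k a) - Φ (Function.update B k a))
        - (Φ (Function.update A k b) - Φ (Function.update B k b))| := by congr 1; ring
    _ ≤ √(C * S) * |a - b| := hmvt
    _ ≤ √(C * S) := mul_le_of_le_one_right (Real.sqrt_nonneg _) hab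

/-- Let `Φ : ℝⁿ → ℝ` be twice continuously differentiable, `k ∈ {1,…,n}`,
`A, B ∈ [0,1]ⁿ` and `a, b ∈ [0,1]`. With `Φ_k(v,y)` denoting `Φ` evaluated at `v` with its
`k`-th coordinate replaced by `y`, the second-order difference
`T = [Φ_k(A,a) - Φ_k(A,b)] - [Φ_k(B,a) - Φ_k(B,b)]` satisfies
`T² ≤ ‖∑_{l ≠ k} (∂_{lk} Φ)²‖_∞ ⬝ ∑_{l ≠ k} (A_l - B_l)²`; the sup-norm bound is expressed by
quantifying over all upper bounds `C` of `x ↦ ∑_{l ≠ k} (∂_{lk} Φ x)²`. -/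
theorem statement5
    {n : ℕ} (Φ : (Fin n → ℝ) → ℝ) (hΦ : ContDiff ℝ 2 Φ) (k : Fin n)
    (A B : Fin n → ℝ) (hA : ∀ i, A i ∈ Set.Icc (0 : ℝ) 1) (hB : ∀ i, B i ∈ Set.Icc (0 : ℝ) 1)
    (a b : ℝ) (ha : a ∈ Set.Icc (0 : ℝ) 1) (hb : b ∈ Set.Icc (0 : ℝ) 1)
    (C : ℝ) (hC : ∀ x : Fin n → ℝ, ∑ l ∈ Finset.univ.erase k, (pderiv2 Φ l k x) ^ 2 ≤ C) :
    ((Φ (Function.update A k a) - Φ (Function.update A k b))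
      - (Φ (Function.update B k a) - Φ (Function.update B k b))) ^ 2
      ≤ C * ∑ l ∈ Finset.univ.erase k, (A l - B l) ^ 2 :=
  statement5_general Φ hΦ k A B a b ha hb C hC
end

section
/- Let X = (X_1, ..., X_n) be a vector of independent identically distributed random variables with values in a set 𝒳, and let ℱ be a finite class of functions f : 𝒳 → [0,1]. Then for every δ > 0, with probability at least 1 − δ in X it holds for all f ∈ ℱ that E[f(X_1)] ≤ (1/n) Σ_{i=1}^n f(X_i) + (2/n) E[R(ℱ(X))] + √( ln(1/δ) / (2n) ). -/
/-!
The uniform deviation `g x = sup_{f ∈ F} (E f - (1/n) ∑ᵢ f (xᵢ))` changes by at most `1/n` when a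
single sample point is changed. McDiarmid's inequality (proved by peeling off one coordinate of the
product measure at a time and applying Hoeffding's lemma to it) therefore makes `g - E g`
sub-Gaussian with variance proxy `1/(4n)`, so `g` exceeds `E g + t` with probability at most
`exp (-2 n t²) = δ` for `t = √(ln(1/δ)/(2n))`.

It remains to bound `E g` by symmetrization. Replacing `E f` by the empirical mean of an
independent ghost sample `y` can only increase `E g`; exchanging `xᵢ` and `yᵢ` at the coordinates
where `εᵢ = -1` preserves the joint law of `(x, y)`, so one may average over all sign patterns `ε`,
and the resulting supremum splits into two Rademacher averages, one for `x` and one for `y`.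
-/

open MeasureTheory ProbabilityTheory Finset

open Real
open scoped NNReal

lemma Finset.integrable_sup' {α β : Type*} [MeasurableSpace α] {μ : Measure α} {s : Finset β}
    (hs : s.Nonempty) {G : β → α → ℝ} (hG : ∀ b ∈ s, Integrable (G b) μ) :
    Integrable (fun x => s.sup' hs fun b => G b x) μ := by
  simp_rw [← Finset.sup'_apply]
  exact Finset.sup'_induction (p := fun g => Integrable g μ) hs G (fun _ h₁ _ h₂ => h₁.sup h₂) hG

lemma Finset.sup'_integral_le_integral_sup' {α β : Type*} [MeasurableSpace α] {μ : Measure α}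
    {s : Finset β} (hs : s.Nonempty) {G : β → α → ℝ} (hG : ∀ b ∈ s, Integrable (G b) μ) :
    (s.sup' hs fun b => ∫ x, G b x ∂μ) ≤ ∫ x, s.sup' hs (fun b => G b x) ∂μ :=
  Finset.sup'_le hs _ fun b hb =>
    integral_mono (hG b hb) (integrable_sup' hs hG) fun x => le_sup' (G · x) hb

lemma exists_forall_mem_Icc_of_sub_le {α : Type*} [Nonempty α] {f : α → ℝ} {c : ℝ}
    (h : ∀ x y, f x - f y ≤ c) : ∃ a, ∀ x, f x ∈ Set.Icc a (a + c) := by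
  let x₀ := Classical.arbitrary α
  have hbdd : BddBelow (Set.range f) := ⟨f x₀ - c, by rintro _ ⟨x, rfl⟩; linarith [h x₀ x]⟩
  exact ⟨⨅ y, f y, fun x => ⟨ciInf_le hbdd x,
    by linarith [le_ciInf fun y => (by linarith [h x y] : f x - c ≤ f y)]⟩⟩

section Probability

variable {α : Type*} [MeasurableSpace α] {μ : Measure α}

lemma integral_pi_fin_succ [SigmaFinite μ] {E : Type*} [NormedAddCommGroup E]
    [NormedSpace ℝ E] {m : ℕ} {φ : (Fin (m + 1) → α) → E}
    (hφ : Integrable φ (Measure.pi fun _ => μ)) :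
    ∫ x, φ x ∂(Measure.pi fun _ => μ) =
      ∫ y, ∫ a, φ (Fin.cons a y) ∂μ ∂(Measure.pi fun _ : Fin m => μ) := by
  have hmp := (measurePreserving_piFinSuccAbove (fun _ : Fin (m + 1) => μ) 0).symm
  rw [← hmp.integral_comp']
  exact (integral_prod_symm _ (hmp.integrable_comp_of_integrable hφ)).trans
    (by simp [Fin.consEquiv])

lemma mgf_sub_integral_pi_fin_succ [SigmaFinite μ] {m : ℕ} {g : (Fin (m + 1) → α) → ℝ} {t : ℝ}
    (hg : Integrable g (Measure.pi fun _ => μ))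
    (hexp : Integrable (fun x => exp (t * (g x - ∫ y, g y ∂Measure.pi fun _ => μ)))
      (Measure.pi fun _ => μ)) :
    mgf (fun x => g x - ∫ y, g y ∂Measure.pi fun _ => μ) (Measure.pi fun _ => μ) t =
      ∫ y, mgf (fun a => g (Fin.cons a y) - ∫ b, g (Fin.cons b y) ∂μ) μ t *
        exp (t * (∫ a, g (Fin.cons a y) ∂μ - ∫ z, ∫ a, g (Fin.cons a z) ∂μ
          ∂Measure.pi fun _ : Fin m => μ)) ∂Measure.pi fun _ : Fin m => μ := by
  unfold mgf
  rw [integral_pi_fin_succ hexp, integral_pi_fin_succ hg]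
  refine integral_congr_ae (ae_of_all _ fun y => ?_)
  simp only [← integral_mul_const, ← exp_add]
  congr 1 with a
  congr 1
  ring

variable [IsProbabilityMeasure μ]

lemma integrable_of_forall_sub_le {f : α → ℝ} (hf : Measurable f) {c : ℝ}
    (h : ∀ x y, f x - f y ≤ c) : Integrable f μ := by
  have := nonempty_of_isProbabilityMeasure μ
  obtain ⟨a, ha⟩ := exists_forall_mem_Icc_of_sub_le h
  exact Integrable.of_mem_Icc _ _ hf.aemeasurable (ae_of_all _ ha)

lemma hasSubgaussianMGF_sub_integral_of_forall_sub_le {f : α → ℝ} (hf : Measurable f) {c : ℝ≥0}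
    (h : ∀ x y, f x - f y ≤ c) : HasSubgaussianMGF (fun x => f x - μ[f]) ((c / 2) ^ 2) μ := by
  have := nonempty_of_isProbabilityMeasure μ
  obtain ⟨a, ha⟩ := exists_forall_mem_Icc_of_sub_le h
  simpa using hasSubgaussianMGF_of_mem_Icc hf.aemeasurable (ae_of_all _ ha)

lemma ofReal_one_sub_le_of_measure_compl_le {A : Set α} {δ : ℝ} (hδ : 0 ≤ δ)
    (h : μ Aᶜ ≤ ENNReal.ofReal δ) : ENNReal.ofReal (1 - δ) ≤ μ A := by
  rw [ENNReal.ofReal_sub _ hδ, ENNReal.ofReal_one, tsub_le_iff_right]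
  calc 1 = μ (A ∪ Aᶜ) := by simp
    _ ≤ μ A + μ Aᶜ := measure_union_le A Aᶜ
    _ ≤ μ A + ENNReal.ofReal δ := by gcongr

end Probability

section McDiarmid

variable {α : Type*}

def HasBoundedDifferences {ι : Type*} (g : (ι → α) → ℝ) (c : ℝ) : Prop :=
  ∀ i (x y : ι → α), (∀ j ≠ i, x j = y j) → g x - g y ≤ c

namespace HasBoundedDifferences

variable {m : ℕ} {c : ℝ}

lemma sub_cons_le {g : (Fin (m + 1) → α) → ℝ} (hg : HasBoundedDifferences g c) (a b : α)
    (y : Fin m → α) : g (Fin.cons a y) - g (Fin.cons b y) ≤ c :=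
  hg 0 _ _ fun j hj => by
    obtain ⟨k, rfl⟩ := Fin.exists_succ_eq.2 hj
    simp

lemma comp_cons {g : (Fin (m + 1) → α) → ℝ} (hg : HasBoundedDifferences g c) (a : α) :
    HasBoundedDifferences (fun y : Fin m → α => g (Fin.cons a y)) c :=
  fun i x y hxy => hg i.succ _ _ fun j hj => by
    cases j using Fin.cases with
    | zero => rfl
    | succ k => simpa using hxy k (by rintro rfl; exact hj rfl)

lemma sub_le {g : (Fin m → α) → ℝ} (hg : HasBoundedDifferences g c) (x y : Fin m → α) :
    g x - g y ≤ m * c := by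
  induction m with
  | zero => simp [Subsingleton.elim x y]
  | succ m ih =>
    have h₁ := hg.sub_cons_le (x 0) (y 0) (Fin.tail x)
    have h₂ := ih (hg.comp_cons (y 0)) (Fin.tail x) (Fin.tail y)
    simp only [Fin.cons_self_tail] at h₁ h₂
    push_cast
    linarith

variable [MeasurableSpace α] {μ : Measure α} [IsProbabilityMeasure μ]

lemma integral_cons {g : (Fin (m + 1) → α) → ℝ} (hg : HasBoundedDifferences g c)
    (hint : ∀ y, Integrable (fun a => g (Fin.cons a y)) μ) :
    HasBoundedDifferences (fun y : Fin m → α => ∫ a, g (Fin.cons a y) ∂μ) c := by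
  intro i x y hxy
  rw [← integral_sub (hint x) (hint y)]
  calc ∫ a, g (Fin.cons a x) - g (Fin.cons a y) ∂μ ≤ ∫ _, c ∂μ :=
        integral_mono ((hint x).sub (hint y)) (integrable_const c)
          fun a => hg.comp_cons a i x y hxy
    _ = c := by simp

lemma integrable_exp_mul {g : (Fin m → α) → ℝ} (hg : Measurable g)
    (hgc : HasBoundedDifferences g c) (b t : ℝ) :
    Integrable (fun x => exp (t * (g x - b))) (Measure.pi fun _ => μ) := by
  have := nonempty_of_isProbabilityMeasure μ
  obtain ⟨a, ha⟩ := exists_forall_mem_Icc_of_sub_le hgc.sub_le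
  refine integrable_exp_mul_of_mem_Icc (a := a - b) (b := a + m * c - b)
    (hg.sub_const b).aemeasurable (ae_of_all _ fun x => ?_)
  constructor <;> linarith [(ha x).1, (ha x).2]

end HasBoundedDifferences

variable [MeasurableSpace α] {μ : Measure α} [IsProbabilityMeasure μ]

theorem hasSubgaussianMGF_of_hasBoundedDifferences {m : ℕ} {g : (Fin m → α) → ℝ}
    (hg : Measurable g) {c : ℝ≥0} (hgc : HasBoundedDifferences g c) :
    HasSubgaussianMGF (fun x => g x - ∫ y, g y ∂Measure.pi fun _ => μ) (m * (c / 2) ^ 2)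
      (Measure.pi fun _ => μ) := by
  induction m with
  | zero =>
    have hconst : ∀ x, g x - ∫ y, g y ∂Measure.pi (fun _ => μ) = 0 := fun x => by
      simp [fun y => congrArg g (Subsingleton.elim y x)]
    simp [hconst]
  | succ m ih =>
    set Pm := Measure.pi fun _ : Fin m => μ
    have hcons_meas : Measurable fun p : α × (Fin m → α) => g (Fin.cons p.1 p.2) :=
      hg.comp (by simpa [Fin.consEquiv] using
        (MeasurableEquiv.piFinSuccAbove (fun _ => α) 0).symm.measurable)
    have hslice_meas (y : Fin m → α) : Measurable fun a => g (Fin.cons a y) :=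
      hcons_meas.comp measurable_prodMk_right
    set h : (Fin m → α) → ℝ := fun y => ∫ a, g (Fin.cons a y) ∂μ
    have hh : HasSubgaussianMGF (fun y => h y - ∫ z, h z ∂Pm) (m * (c / 2) ^ 2) Pm :=
      ih (StronglyMeasurable.integral_prod_left' hcons_meas.stronglyMeasurable).measurable
        (hgc.integral_cons fun y => integrable_of_forall_sub_le (hslice_meas y)
          fun a b => hgc.sub_cons_le a b y)
    have hslice (y : Fin m → α) (t : ℝ) :
        mgf (fun a => g (Fin.cons a y) - h y) μ t ≤ exp ((c / 2) ^ 2 * t ^ 2 / 2) :=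
      (hasSubgaussianMGF_sub_integral_of_forall_sub_le (hslice_meas y)
        fun a b => hgc.sub_cons_le a b y).mgf_le t
    refine ⟨fun t => by simpa using hgc.integrable_exp_mul hg _ t, fun t => ?_⟩
    calc mgf (fun x => g x - ∫ y, g y ∂Measure.pi fun _ => μ) (Measure.pi fun _ => μ) t
        = ∫ y, mgf (fun a => g (Fin.cons a y) - h y) μ t * exp (t * (h y - ∫ z, h z ∂Pm)) ∂Pm :=
          mgf_sub_integral_pi_fin_succ (integrable_of_forall_sub_le hg hgc.sub_le)
            (hgc.integrable_exp_mul hg _ t)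
      _ ≤ ∫ y, exp ((c / 2) ^ 2 * t ^ 2 / 2) * exp (t * (h y - ∫ z, h z ∂Pm)) ∂Pm :=
          integral_mono_of_nonneg (ae_of_all _ fun y => mul_nonneg mgf_nonneg (exp_pos _).le)
            ((hh.integrable_exp_mul t).const_mul _)
            (ae_of_all _ fun y => mul_le_mul_of_nonneg_right (hslice y t) (exp_pos _).le)
      _ ≤ exp ((c / 2) ^ 2 * t ^ 2 / 2) * exp ((m * (c / 2) ^ 2 : ℝ≥0) * t ^ 2 / 2) := by
          rw [integral_const_mul]
          gcongr
          exact hh.mgf_le t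
      _ = exp (((m + 1 : ℕ) * (c / 2) ^ 2 : ℝ≥0) * t ^ 2 / 2) := by
          rw [← exp_add]
          push_cast
          congr 1
          ring

end McDiarmid

noncomputable section Symmetrization

variable {α : Type*} {n : ℕ}

def swapWhere {ι : Type*} (ε : ι → Bool) (p : (ι → α) × (ι → α)) : (ι → α) × (ι → α) :=
  (fun i => if ε i then p.1 i else p.2 i, fun i => if ε i then p.2 i else p.1 i)

def empiricalMean (f : α → ℝ) (x : Fin n → α) : ℝ := (n : ℝ)⁻¹ * ∑ i, f (x i)

def rademacherSum (ε : Fin n → Bool) (f : α → ℝ) (x : Fin n → α) : ℝ :=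
  ∑ i, (if ε i then (1 : ℝ) else -1) * f (x i)

def rademacherAverage (F : Finset (α → ℝ)) (hF : F.Nonempty) (x : Fin n → α) : ℝ :=
  (2 ^ n : ℝ)⁻¹ * ∑ ε : Fin n → Bool, F.sup' hF fun f => rademacherSum ε f x

def twoSampleDeviation (F : Finset (α → ℝ)) (hF : F.Nonempty) (p : (Fin n → α) × (Fin n → α)) :
    ℝ :=
  F.sup' hF fun f => empiricalMean f p.2 - empiricalMean f p.1

lemma empiricalMean_swapWhere_sub (ε : Fin n → Bool) (f : α → ℝ)
    (p : (Fin n → α) × (Fin n → α)) :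
    empiricalMean f (swapWhere ε p).2 - empiricalMean f (swapWhere ε p).1 =
      (n : ℝ)⁻¹ * (rademacherSum ε f p.2 + rademacherSum (fun i => !ε i) f p.1) := by
  simp only [empiricalMean, rademacherSum, ← mul_sub, ← sum_sub_distrib, ← sum_add_distrib]
  congr 1
  refine sum_congr rfl fun i _ => ?_
  by_cases h : ε i <;> simp [swapWhere, h] <;> ring

lemma sum_sup'_rademacherSum_not (F : Finset (α → ℝ)) (hF : F.Nonempty) (x : Fin n → α) :
    ∑ ε : Fin n → Bool, (F.sup' hF fun f => rademacherSum (fun i => !ε i) f x) =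
      ∑ ε : Fin n → Bool, F.sup' hF fun f => rademacherSum ε f x :=
  Fintype.sum_equiv (Function.Involutive.toPerm _ fun ε => funext fun i => Bool.not_not (ε i))
    _ _ fun _ => rfl

lemma average_twoSampleDeviation_swapWhere_le (F : Finset (α → ℝ)) (hF : F.Nonempty)
    (p : (Fin n → α) × (Fin n → α)) :
    (2 ^ n : ℝ)⁻¹ * ∑ ε : Fin n → Bool, twoSampleDeviation F hF (swapWhere ε p) ≤
      (n : ℝ)⁻¹ * (rademacherAverage F hF p.2 + rademacherAverage F hF p.1) := by
  simp_rw [twoSampleDeviation, empiricalMean_swapWhere_sub]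
  calc (2 ^ n : ℝ)⁻¹ * ∑ ε : Fin n → Bool, (F.sup' hF fun f =>
          (n : ℝ)⁻¹ * (rademacherSum ε f p.2 + rademacherSum (fun i => !ε i) f p.1))
      ≤ (2 ^ n : ℝ)⁻¹ * ∑ ε : Fin n → Bool, (n : ℝ)⁻¹ *
          ((F.sup' hF fun f => rademacherSum ε f p.2) +
            F.sup' hF fun f => rademacherSum (fun i => !ε i) f p.1) := by
        gcongr with ε
        exact sup'_le hF _ fun f hf => by
          gcongr <;> exact le_sup' (fun f => rademacherSum _ f _) hf
    _ = (n : ℝ)⁻¹ * (rademacherAverage F hF p.2 + rademacherAverage F hF p.1) := by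
        simp only [rademacherAverage, ← mul_sum, sum_add_distrib, sum_sup'_rademacherSum_not]
        ring

variable [MeasurableSpace α] {μ : Measure α}

lemma measurePreserving_swapWhere {ι : Type*} [Fintype ι] [SigmaFinite μ] (ε : ι → Bool) :
    MeasurePreserving (swapWhere ε) ((Measure.pi fun _ : ι => μ).prod (Measure.pi fun _ => μ))
      ((Measure.pi fun _ : ι => μ).prod (Measure.pi fun _ => μ)) := by
  have he := measurePreserving_arrowProdEquivProdArrow α α ι (fun _ => μ) (fun _ => μ)
  have hflip := measurePreserving_pi (fun _ : ι => μ.prod μ) (fun _ => μ.prod μ)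
    (f := fun i => if ε i then id else Prod.swap) fun i => by
      cases ε i
      · exact Measure.measurePreserving_swap
      · exact MeasurePreserving.id _
  convert he.comp (hflip.comp he.symm) using 1
  funext p
  ext i <;> cases h : ε i <;> simp [swapWhere, h, MeasurableEquiv.arrowProdEquivProdArrow,
    Equiv.arrowProdEquivProdArrow]

variable [IsProbabilityMeasure μ] {F : Finset (α → ℝ)} (hF : F.Nonempty)

lemma integrable_empiricalMean {f : α → ℝ} (hf : Integrable f μ) :
    Integrable (empiricalMean (n := n) f) (Measure.pi fun _ => μ) :=
  (integrable_finsetSum _ fun _ _ => integrable_comp_eval hf).const_mul _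

lemma integral_empiricalMean (hn : n ≠ 0) {f : α → ℝ} (hf : Integrable f μ) :
    ∫ x, empiricalMean f x ∂(Measure.pi fun _ : Fin n => μ) = ∫ z, f z ∂μ := by
  have heval (i : Fin n) : ∫ x, f (x i) ∂(Measure.pi fun _ => μ) = ∫ z, f z ∂μ :=
    integral_comp_eval (μ := fun _ => μ) hf.aestronglyMeasurable
  simp only [empiricalMean]
  rw [integral_const_mul, integral_finsetSum _ fun i _ => integrable_comp_eval hf]
  simp [heval, hn]

lemma integrable_rademacherAverage (hFint : ∀ f ∈ F, Integrable f μ) :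
    Integrable (rademacherAverage (n := n) F hF) (Measure.pi fun _ => μ) :=
  (integrable_finsetSum _ fun _ _ => integrable_sup' hF fun f hf =>
    integrable_finsetSum _ fun _ _ => (integrable_comp_eval (hFint f hf)).const_mul _).const_mul _

lemma integrable_twoSampleDeviation (hFint : ∀ f ∈ F, Integrable f μ) :
    Integrable (twoSampleDeviation (n := n) F hF)
      ((Measure.pi fun _ => μ).prod (Measure.pi fun _ => μ)) :=
  integrable_sup' hF fun f hf => ((integrable_empiricalMean (hFint f hf)).comp_snd _).sub
    ((integrable_empiricalMean (hFint f hf)).comp_fst _)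

lemma integral_twoSampleDeviation_le (hFint : ∀ f ∈ F, Integrable f μ) :
    ∫ p, twoSampleDeviation F hF p
        ∂((Measure.pi fun _ : Fin n => μ).prod (Measure.pi fun _ => μ)) ≤
      (2 / n) * ∫ x, rademacherAverage F hF x ∂(Measure.pi fun _ : Fin n => μ) := by
  set ν := Measure.pi fun _ : Fin n => μ
  have hS := integrable_twoSampleDeviation (n := n) hF hFint
  have hR := integrable_rademacherAverage (n := n) hF hFint
  have hS_swap (ε : Fin n → Bool) :
      Integrable (fun p => twoSampleDeviation F hF (swapWhere ε p)) (ν.prod ν) :=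
    (measurePreserving_swapWhere ε).integrable_comp_of_integrable hS
  have hswap (ε : Fin n → Bool) :
      ∫ p, twoSampleDeviation F hF (swapWhere ε p) ∂(ν.prod ν) =
        ∫ p, twoSampleDeviation F hF p ∂(ν.prod ν) := by
    have hmp := measurePreserving_swapWhere (μ := μ) ε
    rw [← integral_map hmp.measurable.aemeasurable (by
      rw [hmp.map_eq]; exact hS.aestronglyMeasurable), hmp.map_eq]
  calc ∫ p, twoSampleDeviation F hF p ∂(ν.prod ν)
      = ∫ p, (2 ^ n : ℝ)⁻¹ * ∑ ε : Fin n → Bool, twoSampleDeviation F hF (swapWhere ε p)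
          ∂(ν.prod ν) := by
        rw [integral_const_mul, integral_finsetSum _ fun ε _ => hS_swap ε]
        simp [hswap]
    _ ≤ ∫ p, (n : ℝ)⁻¹ * (rademacherAverage F hF p.2 + rademacherAverage F hF p.1)
          ∂(ν.prod ν) :=
        integral_mono ((integrable_finsetSum _ fun ε _ => hS_swap ε).const_mul _)
          (((hR.comp_snd ν).add (hR.comp_fst ν)).const_mul _)
          (average_twoSampleDeviation_swapWhere_le F hF)
    _ = (2 / n) * ∫ x, rademacherAverage F hF x ∂ν := by
        rw [integral_const_mul, integral_add (hR.comp_snd ν) (hR.comp_fst ν), integral_fun_snd,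
          integral_fun_fst, probReal_univ, one_smul]
        ring

end Symmetrization

noncomputable section UniformDeviation

variable {α : Type*} [MeasurableSpace α] {n : ℕ}

def uniformDeviation (μ : Measure α) (F : Finset (α → ℝ)) (hF : F.Nonempty) (x : Fin n → α) :
    ℝ :=
  F.sup' hF fun f => ∫ z, f z ∂μ - empiricalMean f x

lemma integral_sub_empiricalMean_le_uniformDeviation (μ : Measure α) {F : Finset (α → ℝ)}
    (hF : F.Nonempty) {f : α → ℝ} (hf : f ∈ F) (x : Fin n → α) :
    ∫ z, f z ∂μ - empiricalMean f x ≤ uniformDeviation μ F hF x :=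
  le_sup' (fun f => ∫ z, f z ∂μ - empiricalMean f x) hf

lemma measurable_empiricalMean {f : α → ℝ} (hf : Measurable f) :
    Measurable (empiricalMean (n := n) f) :=
  (Finset.measurable_sum _ fun i _ => hf.comp (measurable_pi_apply i)).const_mul _

lemma measurable_uniformDeviation (μ : Measure α) {F : Finset (α → ℝ)} (hF : F.Nonempty)
    (hFmeas : ∀ f ∈ F, Measurable f) : Measurable (uniformDeviation (n := n) μ F hF) := by
  convert Finset.measurable_sup' hF (f := fun f (x : Fin n → α) => ∫ z, f z ∂μ - empiricalMean f x)
    (fun f hf => measurable_const.sub (measurable_empiricalMean (hFmeas f hf))) using 1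
  funext x
  simp [uniformDeviation, Finset.sup'_apply]

omit [MeasurableSpace α] in
lemma empiricalMean_sub_empiricalMean_le {f : α → ℝ} (hf : ∀ z, f z ∈ Set.Icc (0 : ℝ) 1)
    {i : Fin n} {x y : Fin n → α} (hxy : ∀ j ≠ i, x j = y j) :
    empiricalMean f x - empiricalMean f y ≤ (n : ℝ)⁻¹ := by
  rw [empiricalMean, empiricalMean, ← mul_sub, ← sum_sub_distrib,
    sum_eq_single i (fun j _ hj => by rw [hxy j hj, sub_self]) (by simp)]
  exact mul_le_of_le_one_right (by positivity) (by linarith [(hf (x i)).2, (hf (y i)).1])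

lemma hasBoundedDifferences_uniformDeviation (μ : Measure α) {F : Finset (α → ℝ)}
    (hF : F.Nonempty) (hFrange : ∀ f ∈ F, ∀ z, f z ∈ Set.Icc (0 : ℝ) 1) :
    HasBoundedDifferences (uniformDeviation (n := n) μ F hF) (n : ℝ)⁻¹ := by
  intro i x y hxy
  rw [sub_le_iff_le_add]
  refine sup'_le hF _ fun f hf => ?_
  linarith [integral_sub_empiricalMean_le_uniformDeviation μ hF hf y,
    empiricalMean_sub_empiricalMean_le (hFrange f hf) fun j hj => (hxy j hj).symm]

variable (μ : Measure α) [IsProbabilityMeasure μ] {F : Finset (α → ℝ)} (hF : F.Nonempty)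

lemma uniformDeviation_le_integral_twoSampleDeviation (hn : n ≠ 0)
    (hFint : ∀ f ∈ F, Integrable f μ) (x : Fin n → α) :
    uniformDeviation μ F hF x ≤
      ∫ y, twoSampleDeviation F hF (x, y) ∂(Measure.pi fun _ : Fin n => μ) := by
  have hmean : ∀ f ∈ F, ∫ z, f z ∂μ - empiricalMean f x =
      ∫ y, empiricalMean f y - empiricalMean f x ∂(Measure.pi fun _ : Fin n => μ) :=
    fun f hf => by
      rw [integral_sub (integrable_empiricalMean (hFint f hf)) (integrable_const _),
        integral_empiricalMean hn (hFint f hf)]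
      simp
  rw [uniformDeviation, sup'_congr hF rfl hmean]
  exact sup'_integral_le_integral_sup' hF fun f hf =>
    (integrable_empiricalMean (hFint f hf)).sub (integrable_const _)

theorem integral_uniformDeviation_le (hn : n ≠ 0) (hFint : ∀ f ∈ F, Integrable f μ) :
    ∫ x, uniformDeviation μ F hF x ∂(Measure.pi fun _ : Fin n => μ) ≤
      (2 / n) * ∫ x, rademacherAverage F hF x ∂(Measure.pi fun _ : Fin n => μ) := by
  set ν := Measure.pi fun _ : Fin n => μ
  have hS := integrable_twoSampleDeviation (n := n) hF hFint
  calc ∫ x, uniformDeviation μ F hF x ∂ν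
      ≤ ∫ x, ∫ y, twoSampleDeviation F hF (x, y) ∂ν ∂ν :=
        integral_mono (integrable_sup' hF fun f hf =>
          (integrable_const _).sub (integrable_empiricalMean (hFint f hf)))
          hS.integral_prod_left (uniformDeviation_le_integral_twoSampleDeviation μ hF hn hFint)
    _ = ∫ p, twoSampleDeviation F hF p ∂(ν.prod ν) := (integral_prod _ hS).symm
    _ ≤ (2 / n) * ∫ x, rademacherAverage F hF x ∂ν := integral_twoSampleDeviation_le hF hFint

variable (hFmeas : ∀ f ∈ F, Measurable f) (hFrange : ∀ f ∈ F, ∀ z, f z ∈ Set.Icc (0 : ℝ) 1)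
include hFmeas hFrange

theorem measureReal_uniformDeviation_ge_le (hn : 0 < n) {δ : ℝ} (hδ : 0 < δ) (hδ₁ : δ < 1) :
    (Measure.pi fun _ : Fin n => μ).real {x |
      (2 / n) * ∫ y, rademacherAverage F hF y ∂(Measure.pi fun _ : Fin n => μ) +
        √(log (1 / δ) / (2 * n)) ≤ uniformDeviation μ F hF x} ≤ δ := by
  set ν := Measure.pi fun _ : Fin n => μ
  set t := √(log (1 / δ) / (2 * n))
  set g := uniformDeviation (n := n) μ F hF
  have hsymm := integral_uniformDeviation_le μ hF hn.ne' fun f hf =>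
    Integrable.of_mem_Icc 0 1 (hFmeas f hf).aemeasurable (ae_of_all _ (hFrange f hf))
  have hsubG : HasSubgaussianMGF (fun x => g x - ∫ y, g y ∂ν) (n * ((n : ℝ≥0)⁻¹ / 2) ^ 2) ν :=
    hasSubgaussianMGF_of_hasBoundedDifferences (measurable_uniformDeviation μ hF hFmeas)
      (by simpa using hasBoundedDifferences_uniformDeviation μ hF hFrange)
  have hexponent : -t ^ 2 / (2 * ((n * ((n : ℝ≥0)⁻¹ / 2) ^ 2 : ℝ≥0) : ℝ)) = log δ := by
    have hlog : 0 ≤ log (1 / δ) / (2 * n) := by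
      have := log_nonneg (one_le_one_div hδ hδ₁.le)
      positivity
    rw [sq_sqrt hlog, one_div, log_inv]
    push_cast
    field_simp
  calc ν.real {x | (2 / n) * ∫ y, rademacherAverage F hF y ∂ν + t ≤ g x}
      ≤ ν.real {x | t ≤ g x - ∫ y, g y ∂ν} :=
        measureReal_mono fun x hx => by simp only [Set.mem_ofPred_eq] at hx ⊢; linarith
    _ ≤ exp (-t ^ 2 / (2 * ((n * ((n : ℝ≥0)⁻¹ / 2) ^ 2 : ℝ≥0) : ℝ))) :=
        hsubG.measure_ge_le (sqrt_nonneg _)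
    _ = δ := by rw [hexponent, exp_log hδ]

theorem measure_forall_integral_le_empiricalMean_add {Ω : Type*} [MeasurableSpace Ω]
    {P : Measure Ω} [IsProbabilityMeasure P] {T : Ω → Fin n → α} (hT_meas : Measurable T)
    (hT : P.map T = Measure.pi fun _ => μ) (hn : 0 < n) {δ : ℝ} (hδ : 0 < δ) :
    ENNReal.ofReal (1 - δ) ≤ P {ω | ∀ f ∈ F, ∫ z, f z ∂μ ≤ empiricalMean f (T ω) +
      (2 / n) * ∫ ω', rademacherAverage F hF (T ω') ∂P + √(log (1 / δ) / (2 * n))} := by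
  rcases le_or_gt 1 δ with hδ₁ | hδ₁
  · simp [ENNReal.ofReal_of_nonpos (sub_nonpos.2 hδ₁)]
  have hR := (integrable_rademacherAverage (μ := μ) (n := n) hF fun f hf =>
    Integrable.of_mem_Icc 0 1 (hFmeas f hf).aemeasurable (ae_of_all _ (hFrange f hf)))
  rw [← integral_map hT_meas.aemeasurable (hT ▸ hR.aestronglyMeasurable), hT]
  set B : Set (Fin n → α) := {x | (2 / n) * ∫ y, rademacherAverage F hF y ∂(Measure.pi fun _ => μ)
    + √(log (1 / δ) / (2 * n)) ≤ uniformDeviation μ F hF x}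
  have hPB : P (T ⁻¹' B) ≤ ENNReal.ofReal δ := by
    rw [← Measure.map_apply hT_meas
      (measurableSet_le measurable_const (measurable_uniformDeviation μ hF hFmeas)), hT,
      ← ENNReal.ofReal_toReal (measure_ne_top _ B)]
    exact ENNReal.ofReal_le_ofReal
      (measureReal_uniformDeviation_ge_le μ hF hFmeas hFrange hn hδ hδ₁)
  refine ofReal_one_sub_le_of_measure_compl_le hδ.le ((measure_mono fun ω hω => ?_).trans hPB)
  simp only [Set.mem_compl_iff, Set.mem_ofPred_eq, not_forall, not_le] at hω
  obtain ⟨f, hf, hlt⟩ := hω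
  change _ ≤ uniformDeviation μ F hF (T ω)
  linarith [integral_sub_empiricalMean_le_uniformDeviation μ hF hf (T ω)]

end UniformDeviation

/-- Let `X = (X_1,…,X_n)` be i.i.d. `𝒳`-valued random variables and `F` a
finite class of measurable functions `f : 𝒳 → [0,1]`. Then for every `δ > 0`, with
probability at least `1 - δ` in `X`, every `f ∈ F` satisfies
`E[f(X_1)] ≤ (1/n) ∑_i f(X_i) + (2/n) E[R(F(X))] + √(ln(1/δ)/(2n))`, where the Rademacher
average is `R(F(x)) = E_ε sup_{f ∈ F} ∑_i ε_i f(x_i)` with `ε` uniform on `{-1,1}ⁿ`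
(realized as the average over `ε : Fin n → Bool` of `∑_i (±1) f(x_i)`). -/
theorem statement17
    (𝒳 Ω : Type) [MeasurableSpace 𝒳] [MeasurableSpace Ω]
    (P : Measure Ω) [IsProbabilityMeasure P]
    (n : ℕ) (hn : 0 < n) (X : Fin n → Ω → 𝒳)
    (F : Finset (𝒳 → ℝ)) (hFne : F.Nonempty)
    -- X is a vector of independent, identically distributed random variables
    (hXmeas : ∀ i, Measurable (X i))
    (hXindep : iIndepFun X P)
    (hXident : ∀ i, Measure.map (X i) P = Measure.map (X ⟨0, hn⟩) P)
    -- F is a finite class of measurable functions with values in [0,1]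
    (hFmeas : ∀ f ∈ F, Measurable f)
    (hFrange : ∀ f ∈ F, ∀ x : 𝒳, f x ∈ Set.Icc (0 : ℝ) 1)
    (δ : ℝ) (hδ : 0 < δ) :
    ENNReal.ofReal (1 - δ) ≤
      P {ω | ∀ f ∈ F,
        (∫ ω', f (X ⟨0, hn⟩ ω') ∂P) ≤
          (n : ℝ)⁻¹ * ∑ i, f (X i ω)
          + (2 / n) * (∫ ω'', (2 ^ n : ℝ)⁻¹ * ∑ ε : Fin n → Bool,
              F.sup' hFne (fun f => ∑ i, (if ε i then (1 : ℝ) else -1) * f (X i ω'')) ∂P)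
          + Real.sqrt (Real.log (1 / δ) / (2 * n))} := by
  set μ := P.map (X ⟨0, hn⟩)
  have : IsProbabilityMeasure μ := Measure.isProbabilityMeasure_map (hXmeas _).aemeasurable
  have hT : P.map (fun ω i => X i ω) = Measure.pi fun _ => μ := by
    rw [(iIndepFun_iff_map_fun_eq_pi_map fun i => (hXmeas i).aemeasurable).1 hXindep]
    simp_rw [hXident]
  refine (measure_forall_integral_le_empiricalMean_add μ hFne hFmeas hFrange
    (measurable_pi_lambda _ hXmeas) hT hn hδ).trans (measure_mono fun ω hω f hf => ?_)
  calc ∫ ω', f (X ⟨0, hn⟩ ω') ∂P = ∫ z, f z ∂μ :=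
        (integral_map (hXmeas _).aemeasurable (hFmeas f hf).aestronglyMeasurable).symm
    _ ≤ _ := hω f hf
end
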